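/- Let F be the set of finitely supported multi-indices and (u_ν)_{ν∈F} nonnegative reals. Suppose ρ_j > 1 for all j, (ρ_j^{-1}) ∈ ℓ^q(ℕ) with q = 2p/(2-p) for some 0 < p < 2, and ∑_{ν∈F} a_ν^{-2} ρ^{2ν} u_ν^2 < ∞, where a_ν := ∏_j √(2ν_j + 1). Then ∑_{ν∈F} u_ν^p < ∞. -/

import Mathlib

/-!
Write `u_ν = (a_ν⁻¹ ρ^ν u_ν) · (a_ν ρ^{-ν})`. Young's inequality with the conjugate exponents
`2/p` and `2/(2-p)` bounds `u_ν ^ p` by a multiple of the weighted `ℓ²` term plus a multiple of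
`(a_ν ρ^{-ν}) ^ q`, `q = 2p/(2-p)`. The latter is the product over `j` of
`√(2ν_j+1) ^ q (ρ_j ^ (-q)) ^ ν_j`, and a sum over finitely supported multi-indices of such
products converges once each one-variable series `∑ₙ √(2n+1) ^ q (ρ_j ^ (-q)) ^ n` converges and
exceeds its `n = 0` term `1` by a summable amount; that excess is `O(ρ_j ^ (-q))`.
-/

open Finset Real Filter Asymptotics

theorem Finset.sum_finsupp_prod_eq_prod_sum {ι α M : Type*} [Zero α] [CommSemiring M]
    (s : Finset ι) (t : ι → Finset α) (c : ι → α → M) (hc0 : ∀ i, c i 0 = 1) :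
    ∑ ν ∈ s.finsupp t, ν.prod c = ∏ i ∈ s, ∑ a ∈ t i, c i a := by
  classical
  rw [Finset.prod_sum, Finset.finsupp, sum_map]
  refine sum_congr rfl fun g _ => ?_
  simp only [Function.Embedding.coeFn_mk]
  rw [Finsupp.prod_of_support_subset _ (Finsupp.support_indicator_subset s g) _ fun i _ => hc0 i,
    ← prod_attach s]
  exact prod_congr rfl fun i _ => by rw [Finsupp.indicator_of_mem i.2]

theorem summable_finsupp_prod {ι α : Type*} [Zero α] {c : ι → α → ℝ} (hc0 : ∀ i, c i 0 = 1)
    (hc : ∀ i a, 0 ≤ c i a) (hsum : ∀ i, Summable (c i))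
    (htail : Summable fun i => ∑' a, c i a - 1) :
    Summable fun ν : ι →₀ α => ν.prod c := by
  classical
  have htail_nonneg : ∀ i, 0 ≤ ∑' a, c i a - 1 := fun i => by
    simpa [hc0] using (hsum i).le_tsum 0 fun a _ => hc i a
  refine summable_of_sum_le (c := exp (∑' i, (∑' a, c i a - 1)))
    (fun ν => prod_nonneg fun i _ => hc i _) fun S => ?_
  set J := S.sup Finsupp.support
  have hS : S ⊆ J.finsupp fun i => S.image (· i) := fun ν hν =>
    mem_finsupp_iff.2 ⟨le_sup hν, fun i _ => mem_image_of_mem _ hν⟩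
  calc ∑ ν ∈ S, ν.prod c
      ≤ ∑ ν ∈ J.finsupp (fun i => S.image (· i)), ν.prod c :=
        sum_le_sum_of_subset_of_nonneg hS fun ν _ _ => prod_nonneg fun i _ => hc i _
    _ = ∏ i ∈ J, ∑ a ∈ S.image (· i), c i a := sum_finsupp_prod_eq_prod_sum _ _ _ hc0
    _ ≤ ∏ i ∈ J, (1 + (∑' a, c i a - 1)) :=
        prod_le_prod (fun i _ => sum_nonneg fun a _ => hc i a) fun i _ => by
          simpa using (hsum i).sum_le_tsum _ fun a _ => hc i a
    _ ≤ exp (∑ i ∈ J, (∑' a, c i a - 1)) := prod_one_add_le_exp_sum J htail_nonneg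
    _ ≤ exp (∑' i, (∑' a, c i a - 1)) :=
        exp_le_exp.2 (htail.sum_le_tsum _ fun i _ => htail_nonneg i)

theorem summable_sqrt_two_mul_add_one_rpow_mul_geometric (q : ℝ) {r : ℝ} (hr0 : 0 ≤ r)
    (hr1 : r < 1) : Summable fun n : ℕ => √(2 * n + 1) ^ q * r ^ n := by
  set k := ⌈q⌉₊
  have hlin : (fun n : ℕ => 2 * (n : ℝ) + 1) =O[atTop] fun n => (n : ℝ) :=
    IsBigO.of_bound 3 <| (eventually_ge_atTop 1).mono fun n hn => by
      have : (1 : ℝ) ≤ n := by exact_mod_cast hn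
      rw [norm_of_nonneg (by positivity), norm_of_nonneg (by positivity)]
      linarith
  have hpoly : Summable fun n : ℕ => ‖(((2 * n + 1) ^ k : ℕ) : ℝ) * r ^ n‖ :=
    summable_norm_mul_geometric_of_norm_lt_one (by rwa [norm_of_nonneg hr0])
      (by push_cast; exact hlin.pow k)
  refine hpoly.of_nonneg_of_le (fun n => by positivity) fun n => ?_
  have h1 : 1 ≤ 2 * (n : ℝ) + 1 := by linarith [n.cast_nonneg (α := ℝ)]
  rw [norm_of_nonneg (by positivity)]
  push_cast
  gcongr
  calc √(2 * (n : ℝ) + 1) ^ q ≤ √(2 * (n : ℝ) + 1) ^ (k : ℝ) :=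
        rpow_le_rpow_of_exponent_le (one_le_sqrt.2 h1) (Nat.le_ceil q)
    _ = √(2 * (n : ℝ) + 1) ^ k := rpow_natCast _ _
    _ ≤ (2 * (n : ℝ) + 1) ^ k := pow_le_pow_left₀ (sqrt_nonneg _) (sqrt_le_self_iff.2 (.inr h1)) k

theorem tsum_mul_geometric_sub_le {f : ℕ → ℝ} (hf : ∀ n, 0 ≤ f n) {r s : ℝ} (hr : 0 ≤ r)
    (hs : 0 < s) (hrs : r ≤ s) (hsum : Summable fun n => f n * s ^ n) :
    ∑' n, f n * r ^ n - f 0 ≤ r / s * ∑' n, f n * s ^ n := by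
  have hrs' : r / s ≤ 1 := (div_le_one hs).2 hrs
  have hsum_r : Summable fun n => f n * r ^ n :=
    hsum.of_nonneg_of_le (fun n => by have := hf n; positivity)
      fun n => mul_le_mul_of_nonneg_left (pow_le_pow_left₀ hr hrs n) (hf n)
  have hterm : ∀ n, f (n + 1) * r ^ (n + 1) ≤ r / s * (f (n + 1) * s ^ (n + 1)) := fun n =>
    calc f (n + 1) * r ^ (n + 1) = (r / s) ^ (n + 1) * (f (n + 1) * s ^ (n + 1)) := by
          rw [div_pow]; field_simp
      _ ≤ r / s * (f (n + 1) * s ^ (n + 1)) := by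
          have := hf (n + 1)
          exact mul_le_mul_of_nonneg_right (pow_le_of_le_one (by positivity) hrs' n.succ_ne_zero)
            (by positivity)
  have hshift := (summable_nat_add_iff 1).2 hsum
  rw [hsum_r.tsum_eq_zero_add, hsum.tsum_eq_zero_add]
  calc f 0 * r ^ 0 + ∑' n, f (n + 1) * r ^ (n + 1) - f 0
      ≤ ∑' n, r / s * (f (n + 1) * s ^ (n + 1)) := by
        simpa using (summable_nat_add_iff 1).2 hsum_r |>.tsum_le_tsum hterm (hshift.mul_left _)
    _ ≤ r / s * (f 0 * s ^ 0 + ∑' n, f (n + 1) * s ^ (n + 1)) := by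
        rw [tsum_mul_left]; have := hf 0; gcongr; simp [this]

theorem mul_rpow_le_sq_add_rpow {A B p : ℝ} (hA : 0 ≤ A) (hB : 0 ≤ B) (hp0 : 0 < p) (hp2 : p < 2) :
    (A * B) ^ p ≤ p / 2 * A ^ 2 + (2 - p) / 2 * B ^ (2 * p / (2 - p)) := by
  have h2p : 0 < 2 - p := by linarith
  have hconj : (2 / p).HolderConjugate (2 / (2 - p)) :=
    Real.holderConjugate_iff.2 ⟨by rw [lt_div_iff₀ hp0]; linarith, by field_simp; ring⟩
  have hA2 : (A ^ p) ^ (2 / p) = A ^ 2 := by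
    rw [← rpow_mul hA, mul_div_cancel₀ _ hp0.ne', rpow_two]
  have hBq : (B ^ p) ^ (2 / (2 - p)) = B ^ (2 * p / (2 - p)) := by
    rw [← rpow_mul hB, mul_div_assoc', mul_comm]
  calc (A * B) ^ p = A ^ p * B ^ p := mul_rpow hA hB
    _ ≤ (A ^ p) ^ (2 / p) / (2 / p) + (B ^ p) ^ (2 / (2 - p)) / (2 / (2 - p)) :=
        young_inequality_of_nonneg (rpow_nonneg hA p) (rpow_nonneg hB p) hconj
    _ = p / 2 * A ^ 2 + (2 - p) / 2 * B ^ (2 * p / (2 - p)) := by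
        rw [hA2, hBq]; field_simp

theorem rpow_div_pow_eq {x y : ℝ} (hx : 0 ≤ x) (hy : 0 < y) (q : ℝ) (n : ℕ) :
    (x / y ^ n) ^ q = x ^ q * (y ^ (-q)) ^ n := by
  rw [div_rpow hx (by positivity), ← rpow_natCast, ← rpow_mul hy.le, ← rpow_natCast,
    ← rpow_mul hy.le, div_eq_mul_inv, ← rpow_neg hy.le, neg_mul, mul_comm (n : ℝ), mul_comm]

theorem Finsupp.prod_div_prod_pow_rpow {ι : Type*} (ν : ι →₀ ℕ) {f : ι → ℕ → ℝ}
    (hf : ∀ i n, 0 ≤ f i n) {ρ : ι → ℝ} (hρ : ∀ i, 0 < ρ i) (q : ℝ) :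
    ((ν.prod f) / ν.prod fun i n => ρ i ^ n) ^ q =
      ν.prod fun i n => f i n ^ q * (ρ i ^ (-q)) ^ n := by
  simp only [Finsupp.prod]
  rw [← prod_div_distrib,
    ← finsetProd_rpow _ _ fun i _ => div_nonneg (hf i _) (pow_pos (hρ i) _).le]
  exact Finset.prod_congr rfl fun i _ => rpow_div_pow_eq (hf i _) (hρ i) q _

theorem summable_finsupp_prod_sqrt_rpow_mul_pow {ι : Type*} (q : ℝ) {r : ι → ℝ}
    (hr0 : ∀ i, 0 ≤ r i) (hr1 : ∀ i, r i < 1) (hr : Summable r) :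
    Summable fun ν : ι →₀ ℕ => ν.prod fun i n => √(2 * n + 1) ^ q * r i ^ n := by
  have hsum : ∀ {s}, 0 ≤ s → s < 1 → Summable fun n : ℕ => √(2 * n + 1) ^ q * s ^ n :=
    summable_sqrt_two_mul_add_one_rpow_mul_geometric q
  have hnonneg : ∀ i (n : ℕ), 0 ≤ √(2 * n + 1) ^ q * r i ^ n := fun i n => by
    have := hr0 i; positivity
  refine summable_finsupp_prod (fun i => by simp) hnonneg (fun i => hsum (hr0 i) (hr1 i)) ?_
  set C := ∑' n : ℕ, √(2 * n + 1) ^ q * (1 / 2) ^ n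
  refine hr.mul_left (2 * C) |>.of_norm_bounded_eventually ?_
  filter_upwards [hr.tendsto_cofinite_zero.eventually (ge_mem_nhds one_half_pos)] with i hi
  have hone : 1 ≤ ∑' n : ℕ, √(2 * n + 1) ^ q * r i ^ n := by
    simpa using (hsum (hr0 i) (hr1 i)).le_tsum 0 fun n _ => hnonneg i n
  have htail := tsum_mul_geometric_sub_le (fun n => by positivity) (hr0 i) one_half_pos hi
    (hsum one_half_pos.le one_half_lt_one)
  rw [norm_of_nonneg (by linarith)]
  simp only [CharP.cast_eq_zero, mul_zero, zero_add, sqrt_one, one_rpow] at htail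
  linarith [show r i / (1 / 2) * C = 2 * C * r i by ring]

theorem stmt_6 (u : (ℕ →₀ ℕ) → ℝ) (ρ : ℕ → ℝ) (p : ℝ) (hp0 : 0 < p) (hp2 : p < 2)
    (hu : ∀ ν, 0 ≤ u ν) (hρ : ∀ j, 1 < ρ j)
    (hℓq : Summable fun j => (ρ j) ^ (-(2 * p / (2 - p))))
    (hweighted : Summable fun ν : ℕ →₀ ℕ =>
      (ν.prod fun j n => Real.sqrt (2 * n + 1))⁻¹ ^ 2 *
        (ν.prod fun j n => ρ j ^ n) ^ 2 * (u ν) ^ 2) :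
    Summable fun ν : ℕ →₀ ℕ => (u ν) ^ p := by
  set q := 2 * p / (2 - p)
  have hρ0 : ∀ j, 0 < ρ j := fun j => one_pos.trans (hρ j)
  have hq : 0 < q := div_pos (by positivity) (by linarith)
  have hprod := summable_finsupp_prod_sqrt_rpow_mul_pow q (fun j => (rpow_pos_of_pos (hρ0 j) _).le)
    (fun j => rpow_lt_one_of_one_lt_of_neg (hρ j) (neg_lt_zero.2 hq)) hℓq
  refine Summable.of_nonneg_of_le (fun ν => rpow_nonneg (hu ν) p) (fun ν => ?_)
    ((hweighted.mul_left (p / 2)).add (hprod.mul_left ((2 - p) / 2)))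
  set a := ν.prod fun j n => √(2 * n + 1)
  set b := ν.prod fun j n => ρ j ^ n
  have ha : 0 < a := prod_pos fun j _ => sqrt_pos.2 (by positivity)
  have hb : 0 < b := prod_pos fun j _ => pow_pos (hρ0 j) _
  rw [← Finsupp.prod_div_prod_pow_rpow ν (fun _ _ => sqrt_nonneg _) hρ0]
  calc u ν ^ p = (a⁻¹ * b * u ν * (a / b)) ^ p := by field_simp
    _ ≤ p / 2 * (a⁻¹ * b * u ν) ^ 2 + (2 - p) / 2 * (a / b) ^ q :=
        mul_rpow_le_sq_add_rpow (mul_nonneg (by positivity) (hu ν)) (by positivity) hp0 hp2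
    _ = _ := by rw [mul_pow, mul_pow]
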